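/- arXiv:1910.04823 — 2 statements merged into one kernel-verified Lean document; each statement's English description precedes it below -/
import Mathlib

section
/- Let ⟨s,t⟩ be a dihedral Coxeter group with m_{st} odd and longest element w_{st} (a reflection). Define f : ⟨s,t⟩ → {s, 1, t} by: f(w) = w for w ∈ {s, 1, t}; f(w) = w_{st}·w for w ∈ {w_{st}s, w_{st}, w_{st}t}; and f(w) = j for every other w, where j ∈ {s,t} is the first letter of the (unique) minimal-length word representing w. Then f is a folding: for all w, f(ws) ∈ {f(w), f(w)s} and f(wt) ∈ {f(w), f(w)t}. -/
/-- `altProd x y n` is the alternating product `x y x y ⋯` with `n` factors,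
starting with `x`. -/
def altProd {G : Type*} [Monoid G] : G → G → ℕ → G
  | _, _, 0 => 1
  | x, y, n + 1 => x * altProd y x n

open DihedralGroup in
lemma altProd_even (m : ℕ) (n : ℕ) :
    altProd (sr 0) (sr 1) (2*n) = r ((n : ZMod m)) ∧
    altProd (sr 1) (sr 0) (2*n) = r (-(n : ZMod m)) := by
  induction n with
  | zero => constructor <;> simp [altProd]
  | succ n ih =>
    have h1 : 2*(n+1) = 2*n+1+1 := by ring
    rw [h1]
    constructor
    · show sr 0 * (sr 1 * altProd (sr 0) (sr 1) (2*n)) = _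
      rw [ih.1, sr_mul_r, sr_mul_sr]
      push_cast; ring_nf
    · show sr 1 * (sr 0 * altProd (sr 1) (sr 0) (2*n)) = _
      rw [ih.2, sr_mul_r, sr_mul_sr]
      push_cast; ring_nf

open DihedralGroup in
lemma altProd_odd (m : ℕ) (n : ℕ) :
    altProd (sr 0) (sr 1) (2*n+1) = sr (-(n : ZMod m)) ∧
    altProd (sr 1) (sr 0) (2*n+1) = sr (1 + (n : ZMod m)) := by
  constructor
  · show sr 0 * altProd (sr 1) (sr 0) (2*n) = _
    rw [(altProd_even m n).2, sr_mul_r, zero_add]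
  · show sr 1 * altProd (sr 0) (sr 1) (2*n) = _
    rw [(altProd_even m n).1, sr_mul_r]

/-- Let `⟨s,t⟩` be the dihedral Coxeter group with `m = m_{st}` odd (`m ≥ 3`),
realized as `DihedralGroup m` with `s = sr 0`, `t = sr 1`, and let
`w₀ = w_{st} = s t s ⋯ s` (`m` letters) be its longest element (a reflection).
Let `f : ⟨s,t⟩ → {s, 1, t}` be the map with `f(w) = w` for `w ∈ {s, 1, t}`,
`f(w) = w₀·w` for `w ∈ {w₀s, w₀, w₀t}`, and `f(w) = j` for every other `w`, where
`j` is the first letter of the minimal-length word representing `w` (so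
`f(s t s ⋯) = s` and `f(t s t ⋯) = t`).  Then `f` is a folding: it takes values in
`{s, 1, t}` and satisfies `f(ws) ∈ {f(w), f(w)s}` and `f(wt) ∈ {f(w), f(w)t}`. -/
theorem odd_dihedral_folding (m : ℕ) (hm : Odd m) (hm3 : 3 ≤ m)
    (s t : DihedralGroup m) (hs : s = DihedralGroup.sr 0) (ht : t = DihedralGroup.sr 1)
    (w₀ : DihedralGroup m) (hw₀ : w₀ = altProd s t m)
    (f : DihedralGroup m → DihedralGroup m)
    (hf1 : f 1 = 1) (hfs : f s = s) (hft : f t = t)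
    (hfw : f w₀ = w₀ * w₀) (hfws : f (w₀ * s) = w₀ * (w₀ * s))
    (hfwt : f (w₀ * t) = w₀ * (w₀ * t))
    (hfirst_s : ∀ n, 2 ≤ n → n < m →
      altProd s t n ≠ w₀ * s → altProd s t n ≠ w₀ → altProd s t n ≠ w₀ * t →
      f (altProd s t n) = s)
    (hfirst_t : ∀ n, 2 ≤ n → n < m →
      altProd t s n ≠ w₀ * s → altProd t s n ≠ w₀ → altProd t s n ≠ w₀ * t →
      f (altProd t s n) = t) :
    (∀ w, f w ∈ ({s, 1, t} : Set (DihedralGroup m))) ∧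
    ∀ w, (f (w * s) = f w ∨ f (w * s) = f w * s) ∧
      (f (w * t) = f w ∨ f (w * t) = f w * t) := by
  obtain ⟨k, hk⟩ := hm
  haveI : NeZero m := ⟨by omega⟩
  have hk1 : 1 ≤ k := by omega
  -- cast helpers
  have castinj : ∀ a b : ℕ, a < m → b < m → (((a:ℕ):ZMod m) = ((b:ℕ):ZMod m) ↔ a = b) := by
    intro a b ha hb
    constructor
    · intro h
      have := congrArg ZMod.val h
      rwa [ZMod.val_cast_of_lt ha, ZMod.val_cast_of_lt hb] at this
    · rintro rfl; rfl
  have hneg : ∀ a : ℕ, a ≤ m → -((a:ℕ):ZMod m) = (((m - a : ℕ)) : ZMod m) := by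
    intro a ha
    have h2 : ((a:ℕ):ZMod m) + (((m-a:ℕ)):ZMod m) = 0 := by
      rw [← Nat.cast_add, show a + (m-a) = m by omega]; exact ZMod.natCast_self m
    linear_combination -h2
  -- w₀ and friends
  have hw₀' : w₀ = DihedralGroup.sr (-((k:ℕ) : ZMod m)) := by
    rw [hw₀, hs, ht]
    have h := (altProd_odd m k).1
    rwa [← hk] at h
  have hw₀s : w₀ * s = DihedralGroup.r (((k:ℕ)) : ZMod m) := by
    rw [hw₀', hs, DihedralGroup.sr_mul_sr]
    congr 1; ring
  have hw₀t : w₀ * t = DihedralGroup.r ((((k+1:ℕ))) : ZMod m) := by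
    rw [hw₀', ht, DihedralGroup.sr_mul_sr]
    congr 1; push_cast; ring
  have hsq : w₀ * w₀ = 1 := by rw [hw₀']; exact DihedralGroup.sr_mul_self _
  have hfw' : f w₀ = 1 := by rw [hfw, hsq]
  have hfws' : f (w₀ * s) = s := by rw [hfws, ← mul_assoc, hsq, one_mul]
  have hfwt' : f (w₀ * t) = t := by rw [hfwt, ← mul_assoc, hsq, one_mul]
  have hss : s * s = 1 := by rw [hs]; exact DihedralGroup.sr_mul_self _
  have htt : t * t = 1 := by rw [ht]; exact DihedralGroup.sr_mul_self _
  -- characterization of f on rotations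
  have hr : ∀ i : ℕ, i < m → f (DihedralGroup.r ((i:ℕ) : ZMod m)) =
      if i = 0 then 1 else if i ≤ k then s else t := by
    intro i hi
    rcases eq_or_ne i 0 with rfl | h0
    · rw [if_pos rfl, Nat.cast_zero, ← DihedralGroup.one_def, hf1]
    rcases le_or_gt i k with hik | hik
    · rcases eq_or_ne i k with rfl | hik'
      · rw [← hw₀s, hfws', if_neg h0, if_pos le_rfl]
      · have hrepr : DihedralGroup.r ((i:ℕ):ZMod m) = altProd s t (2*i) := by
          rw [hs, ht]; exact ((altProd_even m i).1).symm
        rw [hrepr, hfirst_s (2*i) (by omega) (by omega) ?_ ?_ ?_]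
        · rw [if_neg h0, if_pos hik]
        · rw [← hrepr, hw₀s]
          simp only [ne_eq, DihedralGroup.r.injEq]
          rw [castinj i k (by omega) (by omega)]; omega
        · rw [← hrepr, hw₀']; simp
        · rw [← hrepr, hw₀t]
          simp only [ne_eq, DihedralGroup.r.injEq]
          rw [castinj i (k+1) (by omega) (by omega)]; omega
    · have hcast : ((i:ℕ) : ZMod m) = -(((m - i : ℕ)) : ZMod m) := by
        rw [hneg (m-i) (by omega)]; congr 1; omega
      rcases eq_or_ne i (k+1) with rfl | hik'
      · rw [← hw₀t, hfwt', if_neg h0, if_neg (by omega)]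
      · have hrepr : DihedralGroup.r ((i:ℕ):ZMod m) = altProd t s (2*(m-i)) := by
          rw [hs, ht, hcast]; exact ((altProd_even m (m-i)).2).symm
        rw [hrepr, hfirst_t (2*(m-i)) (by omega) (by omega) ?_ ?_ ?_]
        · rw [if_neg h0, if_neg (by omega)]
        · rw [← hrepr, hw₀s]
          simp only [ne_eq, DihedralGroup.r.injEq]
          rw [castinj i k (by omega) (by omega)]; omega
        · rw [← hrepr, hw₀']; simp
        · rw [← hrepr, hw₀t]
          simp only [ne_eq, DihedralGroup.r.injEq]
          rw [castinj i (k+1) (by omega) (by omega)]; omega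
  -- characterization of f on reflections
  have hsr : ∀ i : ℕ, i < m → f (DihedralGroup.sr ((i:ℕ) : ZMod m)) =
      if i = 0 then s else if i ≤ k then t else if i = k+1 then 1 else s := by
    intro i hi
    rcases eq_or_ne i 0 with rfl | h0
    · rw [if_pos rfl, Nat.cast_zero, ← hs, hfs]
    rcases le_or_gt i k with hik | hik
    · rcases eq_or_ne i 1 with rfl | h1
      · rw [Nat.cast_one, ← ht, hft, if_neg h0, if_pos hik]
      · have hrepr : DihedralGroup.sr ((i:ℕ):ZMod m) = altProd t s (2*(i-1)+1) := by
          rw [hs, ht, (altProd_odd m (i-1)).2]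
          congr 1
          rw [← Nat.cast_one, ← Nat.cast_add]
          congr 1; omega
        rw [hrepr, hfirst_t _ (by omega) (by omega) ?_ ?_ ?_]
        · rw [if_neg h0, if_pos hik]
        · rw [← hrepr, hw₀s]; simp
        · rw [← hrepr, hw₀', hneg k (by omega)]
          simp only [ne_eq, DihedralGroup.sr.injEq]
          rw [castinj i (m-k) (by omega) (by omega)]; omega
        · rw [← hrepr, hw₀t]; simp
    · rcases eq_or_ne i (k+1) with rfl | hik'
      · have hw : DihedralGroup.sr (((k+1:ℕ)):ZMod m) = w₀ := by
          rw [hw₀', hneg k (by omega)]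
          congr 2; omega
        rw [hw, hfw', if_neg h0, if_neg (by omega), if_pos rfl]
      · have hcast : ((i:ℕ) : ZMod m) = -(((m - i : ℕ)) : ZMod m) := by
          rw [hneg (m-i) (by omega)]; congr 1; omega
        have hrepr : DihedralGroup.sr ((i:ℕ):ZMod m) = altProd s t (2*(m-i)+1) := by
          rw [hs, ht, hcast]; exact ((altProd_odd m (m-i)).1).symm
        rw [hrepr, hfirst_s _ (by omega) (by omega) ?_ ?_ ?_]
        · rw [if_neg h0, if_neg (by omega), if_neg hik']
        · rw [← hrepr, hw₀s]; simp
        · rw [← hrepr, hw₀', hneg k (by omega)]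
          simp only [ne_eq, DihedralGroup.sr.injEq]
          rw [castinj i (m-k) (by omega) (by omega)]; omega
        · rw [← hrepr, hw₀t]; simp
  -- multiplication formulas
  have hmul_rs : ∀ i : ℕ, 1 ≤ i → i < m →
      DihedralGroup.r ((i:ℕ):ZMod m) * s = DihedralGroup.sr (((m - i:ℕ)):ZMod m) := by
    intro i h1 h2
    rw [hs, DihedralGroup.r_mul_sr, zero_sub, hneg i (by omega)]
  have hmul_rt : ∀ i : ℕ, 2 ≤ i → i < m →
      DihedralGroup.r ((i:ℕ):ZMod m) * t = DihedralGroup.sr (((m + 1 - i:ℕ)):ZMod m) := by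
    intro i h1 h2
    rw [ht, DihedralGroup.r_mul_sr]
    congr 1
    have h3 : (((m+1-i:ℕ)):ZMod m) + ((i:ℕ):ZMod m) = 1 := by
      rw [← Nat.cast_add, show m+1-i+i = m+1 by omega]
      push_cast [ZMod.natCast_self]; ring
    linear_combination -h3
  have hmul_ss : ∀ i : ℕ, 1 ≤ i → i < m →
      DihedralGroup.sr ((i:ℕ):ZMod m) * s = DihedralGroup.r (((m - i:ℕ)):ZMod m) := by
    intro i h1 h2
    rw [hs, DihedralGroup.sr_mul_sr, zero_sub, hneg i (by omega)]
  have hmul_st : ∀ i : ℕ, 2 ≤ i → i < m →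
      DihedralGroup.sr ((i:ℕ):ZMod m) * t = DihedralGroup.r (((m + 1 - i:ℕ)):ZMod m) := by
    intro i h1 h2
    rw [ht, DihedralGroup.sr_mul_sr]
    congr 1
    have h3 : (((m+1-i:ℕ)):ZMod m) + ((i:ℕ):ZMod m) = 1 := by
      rw [← Nat.cast_add, show m+1-i+i = m+1 by omega]
      push_cast [ZMod.natCast_self]; ring
    linear_combination -h3
  constructor
  · intro w
    rcases w with j | j
    · have hj := ZMod.val_lt j
      have h := hr j.val hj
      rw [ZMod.natCast_val, ZMod.cast_id] at h
      rw [h]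
      split_ifs <;> simp
    · have hj := ZMod.val_lt j
      have h := hsr j.val hj
      rw [ZMod.natCast_val, ZMod.cast_id] at h
      rw [h]
      split_ifs <;> simp
  · intro w
    rcases w with j | j
    · -- rotations
      have hj := ZMod.val_lt j
      have hjj : ((j.val:ℕ) : ZMod m) = j := by rw [ZMod.natCast_val, ZMod.cast_id]
      set i := j.val with hiv
      rw [← hjj]
      constructor
      · -- times s
        rcases eq_or_ne i 0 with h0 | h0
        · rw [h0, Nat.cast_zero, ← DihedralGroup.one_def, one_mul, hfs, hf1, one_mul]
          right; rfl
        · rw [hmul_rs i (by omega) hj, hsr (m-i) (by omega), hr i hj]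
          split_ifs <;> first | omega | tauto | (right; rw [hss]) | (right; rw [one_mul])
      · -- times t
        rcases eq_or_ne i 0 with h0 | h0
        · rw [h0, Nat.cast_zero, ← DihedralGroup.one_def, one_mul, hft, hf1, one_mul]
          right; rfl
        rcases eq_or_ne i 1 with h1 | h1
        · rw [h1, Nat.cast_one, ht, DihedralGroup.r_mul_sr, show (1:ZMod m) - 1 = 0 by ring,
            ← hs, hfs, ← ht]
          have := hr 1 (by omega)
          rw [Nat.cast_one, if_neg one_ne_zero, if_pos hk1] at this
          rw [this]; left; rfl
        · rw [hmul_rt i (by omega) hj, hsr (m+1-i) (by omega), hr i hj]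
          split_ifs <;> first | omega | tauto | (right; rw [htt]) | (right; rw [one_mul])
    · -- reflections
      have hj := ZMod.val_lt j
      have hjj : ((j.val:ℕ) : ZMod m) = j := by rw [ZMod.natCast_val, ZMod.cast_id]
      set i := j.val with hiv
      rw [← hjj]
      constructor
      · -- times s
        rcases eq_or_ne i 0 with h0 | h0
        · rw [h0, Nat.cast_zero, ← hs, hss, hf1, hfs]
          right; rw [hss]
        · rw [hmul_ss i (by omega) hj, hr (m-i) (by omega), hsr i hj]
          split_ifs <;> first | omega | tauto | (right; rw [hss]) | (right; rw [one_mul])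
      · -- times t
        rcases eq_or_ne i 0 with h0 | h0
        · rw [h0, Nat.cast_zero, ← hs]
          have e1 : s * t = DihedralGroup.r (((1:ℕ)):ZMod m) := by
            rw [hs, ht, DihedralGroup.sr_mul_sr, sub_zero, Nat.cast_one]
          rw [e1, hfs, hr 1 (by omega), if_neg one_ne_zero, if_pos hk1]
          left; rfl
        rcases eq_or_ne i 1 with h1 | h1
        · rw [h1, Nat.cast_one, ← ht, htt, hf1, hft]
          right; rw [htt]
        · rw [hmul_st i (by omega) hj, hr (m+1-i) (by omega), hsr i hj]
          split_ifs <;> first | omega | tauto | (right; rw [htt]) | (right; rw [one_mul])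
end

section
/- Let ⟨s,t⟩ be a dihedral Coxeter group with m_{st} even and longest element w_{st}. Define f : ⟨s,t⟩ → {s, 1, t} by: f(w) = w for w ∈ {s, 1, t}; f(w) = 1 for w ∈ {w_{st}s, w_{st}, w_{st}t}; and f(w) = j for every other w, where j is the first letter of the minimal-length word representing w. Then f is a folding: for all w, f(ws) ∈ {f(w), f(w)s} and f(wt) ∈ {f(w), f(w)t}. -/
/-- Let `⟨s,t⟩` be the dihedral Coxeter group with `m = m_{st}` even (`m ≥ 4`),
realized as `DihedralGroup m` with `s = sr 0`, `t = sr 1`, and let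
`w₀ = w_{st} = s t s ⋯ t` (`m` letters) be its longest element.
Let `f : ⟨s,t⟩ → {s, 1, t}` be the map with `f(w) = w` for `w ∈ {s, 1, t}`,
`f(w) = 1` for `w ∈ {w₀s, w₀, w₀t}`, and `f(w) = j` for every other `w`, where `j` is
the first letter of the minimal-length word representing `w` (so `f(s t s ⋯) = s` and
`f(t s t ⋯) = t`).  Then `f` is a folding: it takes values in `{s, 1, t}` and
satisfies `f(ws) ∈ {f(w), f(w)s}` and `f(wt) ∈ {f(w), f(w)t}`. -/
theorem even_dihedral_folding (m : ℕ) (hm : Even m) (hm4 : 4 ≤ m)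
    (s t : DihedralGroup m) (hs : s = DihedralGroup.sr 0) (ht : t = DihedralGroup.sr 1)
    (w₀ : DihedralGroup m) (hw₀ : w₀ = altProd s t m)
    (f : DihedralGroup m → DihedralGroup m)
    (hf1 : f 1 = 1) (hfs : f s = s) (hft : f t = t)
    (hfw : f w₀ = 1) (hfws : f (w₀ * s) = 1) (hfwt : f (w₀ * t) = 1)
    (hfirst_s : ∀ n, 2 ≤ n → n < m →
      altProd s t n ≠ w₀ * s → altProd s t n ≠ w₀ → altProd s t n ≠ w₀ * t →
      f (altProd s t n) = s)
    (hfirst_t : ∀ n, 2 ≤ n → n < m →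
      altProd t s n ≠ w₀ * s → altProd t s n ≠ w₀ → altProd t s n ≠ w₀ * t →
      f (altProd t s n) = t) :
    (∀ w, f w ∈ ({s, 1, t} : Set (DihedralGroup m))) ∧
    ∀ w, (f (w * s) = f w ∨ f (w * s) = f w * s) ∧
      (f (w * t) = f w ∨ f (w * t) = f w * t) := by
  classical
  haveI : NeZero m := ⟨by omega⟩
  obtain ⟨k, hk⟩ := hm
  have hk2 : 2 ≤ k := by omega
  subst hs ht
  open DihedralGroup in
  -- closed form for the alternating products
  have alt : ∀ a : ℕ, (altProd (sr 0 : DihedralGroup m) (sr 1) (2*a) = r (a : ZMod m))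
      ∧ (altProd (sr 1 : DihedralGroup m) (sr 0) (2*a) = r (-(a : ZMod m)))
      ∧ (altProd (sr 0 : DihedralGroup m) (sr 1) (2*a+1) = sr (-(a : ZMod m)))
      ∧ (altProd (sr 1 : DihedralGroup m) (sr 0) (2*a+1) = sr (1 + (a : ZMod m))) := by
    intro a
    induction a with
    | zero => simp [altProd, one_def, -r_zero]
    | succ n ih =>
      obtain ⟨h1, h2, h3, h4⟩ := ih
      have e1 : 2 * (n+1) = (2*n+1) + 1 := by ring
      have e2 : 2 * (n+1) + 1 = (2*n+1) + 1 + 1 := by ring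
      refine ⟨?_, ?_, ?_, ?_⟩
      · rw [e1]; show sr 0 * altProd (sr 1) (sr 0) (2*n+1) = _
        rw [h4, sr_mul_sr]; push_cast; ring_nf
      · rw [e1]; show sr 1 * altProd (sr 0) (sr 1) (2*n+1) = _
        rw [h3, sr_mul_sr]; push_cast; ring_nf
      · rw [e2]
        show sr 0 * (sr 1 * altProd (sr 0) (sr 1) (2*n+1)) = _
        rw [h3, sr_mul_sr, sr_mul_r]; push_cast; ring_nf
      · rw [e2]
        show sr 1 * (sr 0 * altProd (sr 1) (sr 0) (2*n+1)) = _
        rw [h4, sr_mul_sr, sr_mul_r]; push_cast; ring_nf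
  -- cast helpers
  have cinj : ∀ a b : ℕ, a < m → b < m → ((a : ZMod m) = (b : ZMod m)) → a = b := by
    intro a b ha hb h
    have := congrArg ZMod.val h
    rwa [ZMod.val_cast_of_lt ha, ZMod.val_cast_of_lt hb] at this
  have hm0 : ((m : ℕ) : ZMod m) = 0 := ZMod.natCast_self m
  have negc : ∀ a : ℕ, a ≤ m → -((a : ℕ) : ZMod m) = ((m - a : ℕ) : ZMod m) := by
    intro a ha; rw [Nat.cast_sub ha, hm0]; ring
  have subc : ∀ a : ℕ, a ≤ m → (1 : ZMod m) - ((a : ℕ) : ZMod m) = ((m + 1 - a : ℕ) : ZMod m) := by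
    intro a ha; rw [Nat.cast_sub (by omega), Nat.cast_add, hm0, Nat.cast_one]; ring
  -- w₀ facts
  have hw0r : w₀ = r ((k : ℕ) : ZMod m) := by
    have h2k := (alt k).1
    rw [show 2 * k = m by omega] at h2k
    exact hw₀.trans h2k
  have hw0s : w₀ * sr 0 = sr ((k : ℕ) : ZMod m) := by
    rw [hw0r, r_mul_sr, zero_sub, negc k (by omega), show m - k = k by omega]
  have hw0t : w₀ * sr 1 = sr (((k+1 : ℕ)) : ZMod m) := by
    rw [hw0r, r_mul_sr, subc k (by omega), show m + 1 - k = k + 1 by omega]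
  -- values of f
  have frk : f (r ((k:ℕ) : ZMod m)) = 1 := by rw [← hw0r]; exact hfw
  have fsrk : f (sr ((k:ℕ) : ZMod m)) = 1 := by rw [← hw0s]; exact hfws
  have fsrk1 : f (sr ((k+1:ℕ) : ZMod m)) = 1 := by rw [← hw0t]; exact hfwt
  have frs : ∀ a : ℕ, 1 ≤ a → a < k → f (r ((a:ℕ) : ZMod m)) = sr 0 := by
    intro a h1 h2
    rw [← (alt a).1]
    refine hfirst_s (2*a) (by omega) (by omega) ?_ ?_ ?_
    · rw [(alt a).1, hw0s]; simp
    · rw [(alt a).1, hw0r]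
      simp only [ne_eq, r.injEq]
      intro h; exact absurd (cinj a k (by omega) (by omega) h) (by omega)
    · rw [(alt a).1, hw0t]; simp
  have frt : ∀ a : ℕ, k < a → a < m → f (r ((a:ℕ) : ZMod m)) = sr 1 := by
    intro a h1 h2
    have hb : ((a:ℕ) : ZMod m) = -((((m - a) : ℕ)) : ZMod m) := by
      rw [negc (m-a) (by omega), show m - (m - a) = a by omega]
    rw [hb, ← (alt (m-a)).2.1]
    refine hfirst_t (2*(m-a)) (by omega) (by omega) ?_ ?_ ?_
    · rw [(alt (m-a)).2.1, hw0s]; simp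
    · rw [(alt (m-a)).2.1, hw0r, ← hb]
      simp only [ne_eq, r.injEq]
      intro h; exact absurd (cinj a k h2 (by omega) h) (by omega)
    · rw [(alt (m-a)).2.1, hw0t]; simp
  have fsrt : ∀ a : ℕ, 2 ≤ a → a < k → f (sr ((a:ℕ) : ZMod m)) = sr 1 := by
    intro a h1 h2
    have hb : ((a:ℕ) : ZMod m) = 1 + ((((a-1) : ℕ)) : ZMod m) := by
      rw [Nat.cast_sub (by omega)]; push_cast; ring
    rw [hb, ← (alt (a-1)).2.2.2]
    refine hfirst_t (2*(a-1)+1) (by omega) (by omega) ?_ ?_ ?_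
    · rw [(alt (a-1)).2.2.2, hw0s, ← hb]
      simp only [ne_eq, sr.injEq]
      intro h; exact absurd (cinj a k (by omega) (by omega) h) (by omega)
    · rw [(alt (a-1)).2.2.2, hw0r]; simp
    · rw [(alt (a-1)).2.2.2, hw0t, ← hb]
      simp only [ne_eq, sr.injEq]
      intro h; exact absurd (cinj a (k+1) (by omega) (by omega) h) (by omega)
  have fsrs : ∀ a : ℕ, k+2 ≤ a → a < m → f (sr ((a:ℕ) : ZMod m)) = sr 0 := by
    intro a h1 h2
    have hb : ((a:ℕ) : ZMod m) = -((((m-a) : ℕ)) : ZMod m) := by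
      rw [negc (m-a) (by omega), show m - (m - a) = a by omega]
    rw [hb, ← (alt (m-a)).2.2.1]
    refine hfirst_s (2*(m-a)+1) (by omega) (by omega) ?_ ?_ ?_
    · rw [(alt (m-a)).2.2.1, hw0s, ← hb]
      simp only [ne_eq, sr.injEq]
      intro h; exact absurd (cinj a k h2 (by omega) h) (by omega)
    · rw [(alt (m-a)).2.2.1, hw0r]; simp
    · rw [(alt (m-a)).2.2.1, hw0t, ← hb]
      simp only [ne_eq, sr.injEq]
      intro h; exact absurd (cinj a (k+1) h2 (by omega) h) (by omega)
  -- product computations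
  have mul_rs : ∀ a : ℕ, a ≤ m → r ((a:ℕ) : ZMod m) * sr 0 = sr (((m - a : ℕ)) : ZMod m) := by
    intro a h2; rw [r_mul_sr, zero_sub, negc a h2]
  have mul_rt : ∀ a : ℕ, a ≤ m → r ((a:ℕ) : ZMod m) * sr 1 = sr (((m + 1 - a : ℕ)) : ZMod m) := by
    intro a h2; rw [r_mul_sr, subc a h2]
  have mul_ss : ∀ a : ℕ, a ≤ m → sr ((a:ℕ) : ZMod m) * sr 0 = r (((m - a : ℕ)) : ZMod m) := by
    intro a h2; rw [sr_mul_sr, zero_sub, negc a h2]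
  have mul_st : ∀ a : ℕ, a ≤ m → sr ((a:ℕ) : ZMod m) * sr 1 = r (((m + 1 - a : ℕ)) : ZMod m) := by
    intro a h2; rw [sr_mul_sr, subc a h2]
  constructor
  · rintro (j | j) <;>
      obtain ⟨a, ha, rfl⟩ : ∃ a : ℕ, a < m ∧ j = ((a : ℕ) : ZMod m) :=
        ⟨j.val, j.val_lt, ((ZMod.natCast_val j).trans (ZMod.cast_id _ _)).symm⟩
    · obtain h | h | h | h : a = 0 ∨ (1 ≤ a ∧ a < k) ∨ a = k ∨ (k < a ∧ a < m) := by omega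
      · rw [h, Nat.cast_zero, ← one_def, hf1]; simp
      · rw [frs a h.1 h.2]; simp
      · rw [h, frk]; simp
      · rw [frt a h.1 h.2]; simp
    · obtain h | h | h | h | h | h :
          a = 0 ∨ a = 1 ∨ (2 ≤ a ∧ a < k) ∨ a = k ∨ a = k + 1 ∨ (k + 2 ≤ a ∧ a < m) := by omega
      · rw [h, Nat.cast_zero, hfs]; simp
      · rw [h, Nat.cast_one, hft]; simp
      · rw [fsrt a h.1 h.2]; simp
      · rw [h, fsrk]; simp
      · rw [h, fsrk1]; simp
      · rw [fsrs a h.1 h.2]; simp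
  · rintro (j | j) <;>
      obtain ⟨a, ha, rfl⟩ : ∃ a : ℕ, a < m ∧ j = ((a : ℕ) : ZMod m) :=
        ⟨j.val, j.val_lt, ((ZMod.natCast_val j).trans (ZMod.cast_id _ _)).symm⟩
    · -- w = r a
      obtain h | h | h | h : a = 0 ∨ (1 ≤ a ∧ a < k) ∨ a = k ∨ (k < a ∧ a < m) := by omega
      · -- a = 0 : w = 1
        have hone : r ((a:ℕ) : ZMod m) = 1 := by rw [h, Nat.cast_zero, ← one_def]
        constructor
        · right; rw [hone, one_mul, hfs, hf1, one_mul]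
        · right; rw [hone, one_mul, hft, hf1, one_mul]
      · -- 1 ≤ a < k : f w = s
        have hfw' : f (r ((a:ℕ) : ZMod m)) = sr 0 := frs a h.1 h.2
        constructor
        · rw [hfw', mul_rs a (by omega)]
          by_cases hc : a = k - 1
          · right
            rw [show m - a = k + 1 by omega, fsrk1]
            exact (sr_mul_self 0).symm
          · left; exact fsrs (m-a) (by omega) (by omega)
        · left
          rw [hfw', mul_rt a (by omega)]
          by_cases hc : a = 1
          · rw [show m + 1 - a = m by omega, show ((m:ℕ) : ZMod m) = ((0:ℕ) : ZMod m) by simp,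
              Nat.cast_zero, hfs]
          · exact fsrs (m+1-a) (by omega) (by omega)
      · -- a = k : f w = 1
        have hfw' : f (r ((a:ℕ) : ZMod m)) = 1 := by rw [h]; exact frk
        constructor
        · left
          rw [hfw', h, mul_rs k (by omega), show m - k = k by omega, fsrk]
        · left
          rw [hfw', h, mul_rt k (by omega), show m + 1 - k = k + 1 by omega, fsrk1]
      · -- k < a < m : f w = t
        have hfw' : f (r ((a:ℕ) : ZMod m)) = sr 1 := frt a h.1 h.2
        constructor
        · left
          rw [hfw', mul_rs a (by omega)]
          by_cases hc : a = m - 1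
          · rw [show m - a = 1 by omega, Nat.cast_one, hft]
          · exact fsrt (m-a) (by omega) (by omega)
        · rw [hfw', mul_rt a (by omega)]
          by_cases hc : a = k + 1
          · right
            rw [show m + 1 - a = k by omega, fsrk]
            exact (sr_mul_self 1).symm
          · left; exact fsrt (m+1-a) (by omega) (by omega)
    · -- w = sr a
      obtain h | h | h | h | h | h :
          a = 0 ∨ a = 1 ∨ (2 ≤ a ∧ a < k) ∨ a = k ∨ a = k + 1 ∨ (k + 2 ≤ a ∧ a < m) := by omega
      · -- a = 0 : w = s
        subst h
        constructor
        · right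
          rw [Nat.cast_zero, sr_mul_self, hf1, hfs, sr_mul_self]
        · left
          rw [Nat.cast_zero, hfs, sr_mul_sr, sub_zero,
            show (1 : ZMod m) = ((1:ℕ) : ZMod m) by rw [Nat.cast_one], frs 1 le_rfl (by omega)]
      · -- a = 1 : w = t
        subst h
        constructor
        · left
          rw [mul_ss 1 (by omega), frt (m-1) (by omega) (by omega), Nat.cast_one, hft]
        · right
          rw [Nat.cast_one, sr_mul_self, hf1, hft, sr_mul_self]
      · -- 2 ≤ a < k : f w = t
        have hfw' : f (sr ((a:ℕ) : ZMod m)) = sr 1 := fsrt a h.1 h.2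
        refine ⟨Or.inl ?_, Or.inl ?_⟩
        · rw [hfw', mul_ss a (by omega)]
          exact frt (m-a) (by omega) (by omega)
        · rw [hfw', mul_st a (by omega)]
          exact frt (m+1-a) (by omega) (by omega)
      · -- a = k : f w = 1
        constructor
        · left
          rw [h, fsrk, mul_ss k (by omega), show m - k = k by omega, frk]
        · right
          rw [h, fsrk, mul_st k (by omega), show m + 1 - k = k + 1 by omega,
            frt (k+1) (by omega) (by omega), one_mul]
      · -- a = k+1 : f w = 1
        constructor
        · right
          rw [h, fsrk1, mul_ss (k+1) (by omega), show m - (k+1) = k - 1 by omega,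
            frs (k-1) (by omega) (by omega), one_mul]
        · left
          rw [h, fsrk1, mul_st (k+1) (by omega), show m + 1 - (k+1) = k by omega, frk]
      · -- k+2 ≤ a < m : f w = s
        have hfw' : f (sr ((a:ℕ) : ZMod m)) = sr 0 := fsrs a h.1 h.2
        refine ⟨Or.inl ?_, Or.inl ?_⟩
        · rw [hfw', mul_ss a (by omega)]
          exact frs (m-a) (by omega) (by omega)
        · rw [hfw', mul_st a (by omega)]
          exact frs (m+1-a) (by omega) (by omega)
end
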